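/- arXiv:math/0509321 — 3 statements merged into one kernel-verified Lean document; each statement's English description precedes it below -/
import Mathlib

section
/- Let g ∈ L²(ℝᵈ), b ∈ GL_d(ℝ), E(g,b) = {ω : g_b(ω) > 0}, and let u_g(ω) = g(ω)/g_b(b⁻¹ω) on b·E(g,b), zero elsewhere. Then ‖g - u_g‖_{L²(ℝᵈ)} = ‖g_b - χ_{E(g,b) ∩ [0,1]ᵈ}‖_{L²([0,1]ᵈ)}. -/
/-!
Substituting `x = b (ω + s)` with `ω ∈ [0,1)ᵈ` and `s ∈ ℤᵈ` turns `‖F‖²` in `L²(ℝᵈ)` into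
`|det b| ∫_{[0,1]ᵈ} ∑ₛ |F (b (ω + s))|² dω`. The Grammian `g_b` is `ℤᵈ`-periodic, so on the fiber
over `ω` the function `u_g` is `g / g_b(ω)`, and for `F = g - u_g` the fiber sum is
`g_b(ω)² (1 - g_b(ω)⁻¹)² = (g_b(ω) - χ_E(ω))²`; with the convention `0⁻¹ = 0` this also covers the
fibers where `g_b` vanishes. The fibers on which `∑ₛ |g (b (ω + s))|²` diverges form a null set
because `g ∈ L²`.
-/

open MeasureTheory Filter
open scoped Classical
noncomputable section

/-- The Grammian of `g` with respect to the matrix `b`. -/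
def gram2 {d : ℕ} (b : Matrix (Fin d) (Fin d) ℝ) (g : (Fin d → ℝ) → ℂ) (ω : Fin d → ℝ) : ℝ :=
  Real.sqrt (|b.det| * ∑' s : Fin d → ℤ, ‖g (b.mulVec (ω + fun i => (s i : ℝ)))‖ ^ 2)

/-- `E(g,b) = {ω : g_b(ω) > 0}`. -/
def Egb {d : ℕ} (b : Matrix (Fin d) (Fin d) ℝ) (g : (Fin d → ℝ) → ℂ) : Set (Fin d → ℝ) :=
  {ω | 0 < gram2 b g ω}

/-- `u_g(ω) = g(ω)/g_b(b⁻¹ω)` for `ω ∈ b·E(g,b)`, and `0` otherwise. -/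
def ug {d : ℕ} (b : Matrix (Fin d) (Fin d) ℝ) (g : (Fin d → ℝ) → ℂ) (ω : Fin d → ℝ) : ℂ :=
  if ω ∈ b.mulVec '' Egb b g then g ω / (gram2 b g (b⁻¹.mulVec ω) : ℝ) else 0

open scoped ENNReal Matrix

section Periodization

variable {ι : Type*} [Fintype ι]

theorem Matrix.quasiMeasurePreserving_mulVec [DecidableEq ι] {M : Matrix ι ι ℝ}
    (hM : M.det ≠ 0) : Measure.QuasiMeasurePreserving (M *ᵥ ·) volume volume :=
  Measure.LinearMap.quasiMeasurePreserving volume (Matrix.toLin' M) (by rwa [LinearMap.det_toLin'])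

theorem lintegral_eq_abs_det_mul_lintegral_comp_mulVec [DecidableEq ι] {M : Matrix ι ι ℝ}
    (hM : M.det ≠ 0) {f : (ι → ℝ) → ℝ≥0∞} (hf : AEMeasurable f) :
    ∫⁻ x, f x = ENNReal.ofReal |M.det| * ∫⁻ x, f (M *ᵥ x) := by
  have hmap := Real.map_matrix_volume_pi_eq_smul_volume_pi hM
  have hcomp := lintegral_map' (by rw [hmap]; exact hf.smul_measure _)
    (Matrix.toLin' M).continuous_of_finiteDimensional.measurable.aemeasurable
  rw [hmap, lintegral_smul_measure] at hcomp
  simp only [Matrix.toLin'_apply] at hcomp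
  rw [← hcomp, smul_eq_mul, ← mul_assoc, ← ENNReal.ofReal_mul (abs_nonneg _), ← abs_mul,
    mul_inv_cancel₀ hM, abs_one, ENNReal.ofReal_one, one_mul]

def intLatticeEquiv : (ι → ℤ) ≃ (Submodule.span ℤ (Set.range (Pi.basisFun ℝ ι))).toAddSubgroup :=
  ((Pi.basisFun ℝ ι).restrictScalars ℤ).equivFun.symm.toEquiv

theorem coe_intLatticeEquiv (s : ι → ℤ) :
    ((intLatticeEquiv s : Submodule.span ℤ (Set.range (Pi.basisFun ℝ ι))) : ι → ℝ) =
      fun i => (s i : ℝ) := by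
  ext j
  simp [intLatticeEquiv, Pi.single_apply]

theorem lintegral_eq_setLIntegral_Icc_tsum_add_intCast {f : (ι → ℝ) → ℝ≥0∞}
    (hf : AEMeasurable f) :
    ∫⁻ x, f x = ∫⁻ ω in Set.Icc 0 1, ∑' s : ι → ℤ, f (ω + fun i => (s i : ℝ)) := by
  have hfund := ZSpan.isAddFundamentalDomain' (Pi.basisFun ℝ ι) volume
  rw [ZSpan.fundamentalDomain_pi_basisFun] at hfund
  have : Countable (Submodule.span ℤ (Set.range (Pi.basisFun ℝ ι))).toAddSubgroup :=
    Countable.of_equiv _ intLatticeEquiv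
  have htrans (s : ι → ℤ) : AEMeasurable (fun ω => f (ω + fun i => (s i : ℝ))) :=
    hf.comp_quasiMeasurePreserving (measurePreserving_add_right volume _).quasiMeasurePreserving
  have hcube : (Set.univ.pi fun _ : ι => Set.Ico (0 : ℝ) 1) =ᵐ[volume] Set.Icc 0 1 :=
    Measure.univ_pi_Ico_ae_eq_Icc
  rw [hfund.lintegral_eq_tsum'', ← intLatticeEquiv.tsum_eq, Measure.restrict_congr_set hcube,
    lintegral_tsum fun s => (htrans s).restrict]
  refine tsum_congr fun s => lintegral_congr fun ω => ?_
  rw [Submodule.vadd_def, vadd_eq_add, coe_intLatticeEquiv, add_comm]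

theorem AEMeasurable.comp_mulVec_add [DecidableEq ι] {β : Type*} [MeasurableSpace β]
    {M : Matrix ι ι ℝ} (hM : M.det ≠ 0) {f : (ι → ℝ) → β} (hf : AEMeasurable f) (v : ι → ℝ) :
    AEMeasurable (fun x => f (M *ᵥ (x + v))) :=
  hf.comp_quasiMeasurePreserving ((Matrix.quasiMeasurePreserving_mulVec hM).comp
    (measurePreserving_add_right volume v).quasiMeasurePreserving)

theorem lintegral_eq_abs_det_mul_setLIntegral_Icc_tsum [DecidableEq ι] {M : Matrix ι ι ℝ}
    (hM : M.det ≠ 0) {f : (ι → ℝ) → ℝ≥0∞} (hf : AEMeasurable f) :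
    ∫⁻ x, f x = ENNReal.ofReal |M.det| *
      ∫⁻ ω in Set.Icc 0 1, ∑' s : ι → ℤ, f (M *ᵥ (ω + fun i => (s i : ℝ))) := by
  rw [lintegral_eq_abs_det_mul_lintegral_comp_mulVec hM hf,
    lintegral_eq_setLIntegral_Icc_tsum_add_intCast (by simpa using hf.comp_mulVec_add hM 0)]

theorem ae_restrict_Icc_tsum_ne_top [DecidableEq ι] {M : Matrix ι ι ℝ} (hM : M.det ≠ 0)
    {f : (ι → ℝ) → ℝ≥0∞} (hf : AEMeasurable f) (hfin : ∫⁻ x, f x ≠ ⊤) :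
    ∀ᵐ ω ∂volume.restrict (Set.Icc 0 1),
      ∑' s : ι → ℤ, f (M *ᵥ (ω + fun i => (s i : ℝ))) ≠ ⊤ := by
  have hmeas : AEMeasurable (fun ω => ∑' s : ι → ℤ, f (M *ᵥ (ω + fun i => (s i : ℝ))))
      (volume.restrict (Set.Icc 0 1)) :=
    AEMeasurable.tsum fun _ => (hf.comp_mulVec_add hM _).restrict
  refine (ae_lt_top' hmeas fun htop => ?_).mono fun _ => ne_of_lt
  rw [lintegral_eq_abs_det_mul_setLIntegral_Icc_tsum hM hf, htop,
    ENNReal.mul_top (by simpa using hM)] at hfin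
  exact hfin rfl

end Periodization

section Gramian

variable {d : ℕ} {b : Matrix (Fin d) (Fin d) ℝ} {g : (Fin d → ℝ) → ℂ}

theorem gram2_nonneg (ω : Fin d → ℝ) : 0 ≤ gram2 b g ω := Real.sqrt_nonneg _

theorem gram2_add_intCast (ω : Fin d → ℝ) (s : Fin d → ℤ) :
    gram2 b g (ω + fun i => (s i : ℝ)) = gram2 b g ω := by
  simp only [gram2]
  conv_rhs => rw [← (Equiv.addLeft s).tsum_eq]
  congr! 5 with t
  simp only [Equiv.coe_addLeft, Pi.add_apply, Int.cast_add, add_assoc]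
  rfl

-- Off `b '' Egb b g` the denominator vanishes, and there `x / 0 = 0` agrees with `ug = 0`.
theorem ug_eq_div (hb : IsUnit b) (x : Fin d → ℝ) :
    ug b g x = g x / gram2 b g (b⁻¹ *ᵥ x) := by
  have hbinv : b *ᵥ (b⁻¹ *ᵥ x) = x := by
    rw [Matrix.mulVec_mulVec, Matrix.mul_nonsing_inv _ (b.isUnit_iff_isUnit_det.mp hb),
      Matrix.one_mulVec]
  unfold ug
  split_ifs with hx
  · rfl
  · have hzero : gram2 b g (b⁻¹ *ᵥ x) = 0 :=
      (gram2_nonneg _).antisymm' (not_lt.mp fun hpos => hx ⟨_, hpos, hbinv⟩)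
    simp [hzero]

theorem ug_mulVec_add_intCast (hb : IsUnit b) (ω : Fin d → ℝ) (s : Fin d → ℤ) :
    ug b g (b *ᵥ (ω + fun i => (s i : ℝ))) = g (b *ᵥ (ω + fun i => (s i : ℝ))) / gram2 b g ω := by
  rw [ug_eq_div hb, Matrix.mulVec_mulVec, Matrix.nonsing_inv_mul _ (b.isUnit_iff_isUnit_det.mp hb),
    Matrix.one_mulVec, gram2_add_intCast]

theorem indicator_Egb_eq_mul_inv (ω : Fin d → ℝ) :
    (Egb b g).indicator (fun _ => (1 : ℝ)) ω = gram2 b g ω * (gram2 b g ω)⁻¹ := by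
  by_cases hpos : 0 < gram2 b g ω
  · simp [Egb, hpos, hpos.ne']
  · simp [Egb, (gram2_nonneg ω).antisymm' (not_lt.mp hpos)]

theorem enorm_gram2_sq {ω : Fin d → ℝ}
    (hfin : ∑' s : Fin d → ℤ, ‖g (b *ᵥ (ω + fun i => (s i : ℝ)))‖ₑ ^ 2 ≠ ⊤) :
    ‖gram2 b g ω‖ₑ ^ 2 =
      ENNReal.ofReal |b.det| * ∑' s : Fin d → ℤ, ‖g (b *ᵥ (ω + fun i => (s i : ℝ)))‖ₑ ^ 2 := by
  have htoReal : ∑' s : Fin d → ℤ, ‖g (b *ᵥ (ω + fun i => (s i : ℝ)))‖ ^ 2 =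
      (∑' s : Fin d → ℤ, ‖g (b *ᵥ (ω + fun i => (s i : ℝ)))‖ₑ ^ 2).toReal := by
    rw [ENNReal.tsum_toReal_eq fun s => by finiteness]
    simp
  rw [Real.enorm_eq_ofReal (gram2_nonneg ω), ← ENNReal.ofReal_pow (gram2_nonneg ω), gram2,
    Real.sq_sqrt (by positivity), htoReal, ENNReal.ofReal_mul (abs_nonneg _),
    ENNReal.ofReal_toReal hfin]

theorem abs_det_mul_tsum_enorm_sub_ug_sq (hb : IsUnit b) {ω : Fin d → ℝ}
    (hfin : ∑' s : Fin d → ℤ, ‖g (b *ᵥ (ω + fun i => (s i : ℝ)))‖ₑ ^ 2 ≠ ⊤) :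
    ENNReal.ofReal |b.det| * ∑' s : Fin d → ℤ,
        ‖g (b *ᵥ (ω + fun i => (s i : ℝ))) - ug b g (b *ᵥ (ω + fun i => (s i : ℝ)))‖ₑ ^ 2 =
      ‖gram2 b g ω - gram2 b g ω * (gram2 b g ω)⁻¹‖ₑ ^ 2 := by
  simp_rw [ug_mulVec_add_intCast hb]
  set G := gram2 b g ω
  have hterm (z : ℂ) : ‖z - z / G‖ₑ ^ 2 = ‖z‖ₑ ^ 2 * ‖1 - G⁻¹‖ₑ ^ 2 := by
    have hfactor : z - z / G = z * ((1 - G⁻¹ : ℝ) : ℂ) := by push_cast; ring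
    rw [hfactor, enorm_mul, mul_pow, ← ofReal_norm ((1 - G⁻¹ : ℝ) : ℂ), Complex.norm_real,
      ofReal_norm]
  simp_rw [hterm, ENNReal.tsum_mul_right, ← mul_assoc, ← enorm_gram2_sq hfin, ← mul_pow,
    ← enorm_mul, mul_sub, mul_one]
  rfl

theorem aemeasurable_gram2 (hb : b.det ≠ 0) (hg : AEMeasurable g) : AEMeasurable (gram2 b g) :=
  ((AEMeasurable.tsum fun _ => (hg.comp_mulVec_add hb _).norm.pow_const 2).const_mul _).sqrt

theorem aemeasurable_ug (hb : IsUnit b) (hg : AEMeasurable g) : AEMeasurable (ug b g) := by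
  have hdet := b.isUnit_iff_isUnit_det.mp hb
  rw [funext (ug_eq_div hb)]
  exact hg.div (Complex.measurable_ofReal.comp_aemeasurable
    ((aemeasurable_gram2 hdet.ne_zero hg).comp_quasiMeasurePreserving
      (Matrix.quasiMeasurePreserving_mulVec (b.isUnit_nonsing_inv_det hdet).ne_zero)))

end Gramian

/-- `‖g - u_g‖_{L²(ℝᵈ)} = ‖g_b - χ_{E(g,b) ∩ [0,1]ᵈ}‖_{L²([0,1]ᵈ)}`. -/
theorem dist_ug_eq {d : ℕ} (g : (Fin d → ℝ) → ℂ)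
    (hg : MemLp g 2 (volume : Measure (Fin d → ℝ)))
    (b : Matrix (Fin d) (Fin d) ℝ) (hb : IsUnit b) :
    eLpNorm (fun x => g x - ug b g x) 2 (volume : Measure (Fin d → ℝ)) =
      eLpNorm
        (fun ω => gram2 b g ω -
          Set.indicator (Egb b g ∩ Set.Icc (0 : Fin d → ℝ) 1) (fun _ => (1 : ℝ)) ω) 2
        (volume.restrict (Set.Icc (0 : Fin d → ℝ) 1)) := by
  have hdet : b.det ≠ 0 := (b.isUnit_iff_isUnit_det.mp hb).ne_zero
  have hgm : AEMeasurable g := hg.aestronglyMeasurable.aemeasurable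
  have hfin : ∫⁻ x, ‖g x‖ₑ ^ 2 ≠ ⊤ := by
    simpa using (lintegral_rpow_enorm_lt_top_of_eLpNorm_lt_top two_ne_zero ENNReal.ofNat_ne_top
      hg.eLpNorm_lt_top).ne
  simp only [eLpNorm_eq_lintegral_rpow_enorm_toReal two_ne_zero ENNReal.ofNat_ne_top,
    ENNReal.toReal_ofNat, ENNReal.rpow_two]
  rw [lintegral_eq_abs_det_mul_setLIntegral_Icc_tsum (f := fun x => ‖g x - ug b g x‖ₑ ^ 2) hdet
      ((hgm.sub (aemeasurable_ug hb hgm)).enorm.pow_const 2),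
    ← lintegral_const_mul' _ _ ENNReal.ofReal_ne_top]
  congr 1
  refine lintegral_congr_ae ?_
  filter_upwards [ae_restrict_Icc_tsum_ne_top hdet (hgm.enorm.pow_const 2) hfin,
    ae_restrict_mem measurableSet_Icc] with ω hω hIcc
  rw [abs_det_mul_tsum_enorm_sub_ug_sq hb hω, Set.inter_comm, ← Set.indicator_indicator,
    Set.indicator_of_mem hIcc, indicator_Egb_eq_mul_inv]
end
end

section
/- Let I ⊂ ℝᵈ be a bounded d-dimensional interval, Q = [0,1]ᵈ, and for b ∈ GL_d(ℝ) set N_i(b) = {s ∈ ℤᵈ : bQ + bs ⊆ I}. Then |det b| · #N_i(b) → μ(I) as ‖b‖ → 0. -/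
open MeasureTheory Filter
noncomputable section

/-- The cube `bQ + bs`, where `Q = [0,1]ᵈ` and `s ∈ ℤᵈ`. -/
def tile {d : ℕ} (b : Matrix (Fin d) (Fin d) ℝ) (s : Fin d → ℤ) : Set (Fin d → ℝ) :=
  (fun x => b.mulVec (x + fun i => (s i : ℝ))) '' Set.Icc (0 : Fin d → ℝ) 1

/-- The set of `s ∈ ℤᵈ` whose cube `bQ + bs` is contained in `I`. -/
def Ni {d : ℕ} (I : Set (Fin d → ℝ)) (b : Matrix (Fin d) (Fin d) ℝ) : Set (Fin d → ℤ) :=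
  {s | tile b s ⊆ I}

lemma tile_eq {d : ℕ} (b : Matrix (Fin d) (Fin d) ℝ) (s : Fin d → ℤ) :
    tile b s = Matrix.toLin' b ''
      Set.Icc (fun i => (s i : ℝ)) ((fun i => (s i : ℝ)) + 1) := by
  unfold tile
  rw [show (fun x => b.mulVec (x + fun i => (s i : ℝ)))
      = (Matrix.toLin' b) ∘ (fun x => x + fun i => (s i : ℝ)) by
    funext x; simp [Matrix.toLin'_apply]]
  rw [Set.image_comp, Set.image_add_const_Icc]
  ext x
  constructor <;> intro h <;> simpa [zero_add, add_comm] using h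

lemma volume_tile {d : ℕ} (b : Matrix (Fin d) (Fin d) ℝ) (s : Fin d → ℤ) :
    volume (tile b s) = ENNReal.ofReal |b.det| := by
  rw [tile_eq, Measure.addHaar_image_linearMap, LinearMap.det_toLin', Real.volume_Icc_pi]
  simp

lemma hyperplane_null {d : ℕ} (i : Fin d) (c : ℝ) : volume {x : Fin d → ℝ | x i = c} = 0 := by
  have : {x : Fin d → ℝ | x i = c} = Set.univ.pi (fun j => if j = i then {c} else Set.univ) := by
    ext x
    simp only [Set.mem_setOf_eq, Set.mem_pi, Set.mem_univ, forall_true_left]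
    constructor
    · intro h j; by_cases hj : j = i <;> simp [hj, h]
    · intro h; have := h i; simpa using this
  rw [this, volume_pi_pi]
  apply Finset.prod_eq_zero (Finset.mem_univ i)
  simp

lemma Icc_inter_null {d : ℕ} {s t : Fin d → ℤ} (hst : s ≠ t) :
    volume (Set.Icc (fun i => (s i : ℝ)) ((fun i => (s i : ℝ)) + 1) ∩
      Set.Icc (fun i => (t i : ℝ)) ((fun i => (t i : ℝ)) + 1)) = 0 := by
  obtain ⟨i, hi⟩ := Function.ne_iff.1 hst
  rcases hi.lt_or_gt with h | h
  · -- s i < t i, so intersection ⊆ {x | x i = t i}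
    refine measure_mono_null (fun x hx => ?_) (hyperplane_null i (t i : ℝ))
    obtain ⟨⟨hs1, hs2⟩, ⟨ht1, ht2⟩⟩ := hx
    have h1 : x i ≤ (s i : ℝ) + 1 := by simpa using hs2 i
    have h2 : (t i : ℝ) ≤ x i := ht1 i
    have : (s i : ℝ) + 1 ≤ (t i : ℝ) := by exact_mod_cast Int.add_one_le_of_lt h
    show x i = (t i : ℝ)
    exact le_antisymm (h1.trans this) h2
  · refine measure_mono_null (fun x hx => ?_) (hyperplane_null i (s i : ℝ))
    obtain ⟨⟨hs1, hs2⟩, ⟨ht1, ht2⟩⟩ := hx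
    have h1 : x i ≤ (t i : ℝ) + 1 := by simpa using ht2 i
    have h2 : (s i : ℝ) ≤ x i := hs1 i
    have : (t i : ℝ) + 1 ≤ (s i : ℝ) := by exact_mod_cast Int.add_one_le_of_lt h
    show x i = (s i : ℝ)
    exact le_antisymm (h1.trans this) h2

lemma mulVec_injective {d : ℕ} {b : Matrix (Fin d) (Fin d) ℝ} (hb : IsUnit b) :
    Function.Injective b.mulVec := by
  intro x y h
  have hd := (Matrix.isUnit_iff_isUnit_det b).1 hb
  have := congrArg (b⁻¹.mulVec) h
  rwa [Matrix.mulVec_mulVec, Matrix.mulVec_mulVec, Matrix.nonsing_inv_mul b hd,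
    Matrix.one_mulVec, Matrix.one_mulVec] at this

lemma tile_inter_null {d : ℕ} {b : Matrix (Fin d) (Fin d) ℝ} (hb : IsUnit b)
    {s t : Fin d → ℤ} (hst : s ≠ t) : volume (tile b s ∩ tile b t) = 0 := by
  have hinj : Function.Injective (Matrix.toLin' b) := by
    intro x y h
    exact mulVec_injective hb (by simpa [Matrix.toLin'_apply] using h)
  rw [tile_eq, tile_eq, ← Set.image_inter hinj,
    Measure.addHaar_image_linearMap, Icc_inter_null hst, mul_zero]

lemma Ni_finite {d : ℕ} {I : Set (Fin d → ℝ)} (hI : Bornology.IsBounded I)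
    {b : Matrix (Fin d) (Fin d) ℝ} (hb : IsUnit b) : (Ni I b).Finite := by
  obtain ⟨R, hR⟩ := hI.subset_closedBall 0
  set L := LinearMap.toContinuousLinearMap (Matrix.toLin' b⁻¹) with hL
  set M : ℤ := ⌈‖L‖ * R⌉ with hM
  apply Set.Finite.subset (Set.finite_Icc (fun _ : Fin d => -M) (fun _ => M))
  intro s hs
  -- b.mulVec sᵣ ∈ I
  have h0 : b.mulVec (fun i => (s i : ℝ)) ∈ I := by
    apply hs
    exact ⟨0, Set.mem_Icc.2 ⟨le_refl _, fun i => by norm_num⟩, by simp⟩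
  have hnorm : ‖b.mulVec (fun i => (s i : ℝ))‖ ≤ R := by
    simpa [Real.norm_eq_abs, dist_zero_right] using mem_closedBall_zero_iff.1 (hR h0)
  have hd := (Matrix.isUnit_iff_isUnit_det b).1 hb
  have hrec : (fun i => (s i : ℝ)) = L (b.mulVec (fun i => (s i : ℝ))) := by
    simp only [hL, LinearMap.coe_toContinuousLinearMap', Matrix.toLin'_apply,
      Matrix.mulVec_mulVec, Matrix.nonsing_inv_mul b hd, Matrix.one_mulVec]
  have hs_norm : ‖(fun i => (s i : ℝ))‖ ≤ ‖L‖ * R := by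
    rw [hrec]
    calc ‖L (b.mulVec (fun i => (s i : ℝ)))‖ ≤ ‖L‖ * ‖b.mulVec (fun i => (s i : ℝ))‖ :=
          L.le_opNorm _
      _ ≤ ‖L‖ * R := by
          exact mul_le_mul_of_nonneg_left hnorm (norm_nonneg _)
  refine Set.mem_Icc.2 ⟨fun i => ?_, fun i => ?_⟩ <;>
  · have := (norm_le_pi_norm (fun i => (s i : ℝ)) i).trans hs_norm
    rw [Real.norm_eq_abs, abs_le] at this
    have hc : (‖L‖ * R) ≤ (M : ℝ) := Int.le_ceil _
    first
    | · have : -(M:ℝ) ≤ (s i : ℝ) := le_trans (by linarith) this.1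
        exact_mod_cast this
    | · have : (s i : ℝ) ≤ (M:ℝ) := this.2.trans hc
        exact_mod_cast this

lemma mem_tile_floor {d : ℕ} {b : Matrix (Fin d) (Fin d) ℝ} (hb : IsUnit b)
    (x : Fin d → ℝ) : x ∈ tile b (fun i => ⌊b⁻¹.mulVec x i⌋) := by
  have hd := (Matrix.isUnit_iff_isUnit_det b).1 hb
  set y := b⁻¹.mulVec x with hy
  refine ⟨fun i => Int.fract (y i), Set.mem_Icc.2 ⟨fun i => (Int.fract_nonneg _),
    fun i => (Int.fract_lt_one _).le⟩, ?_⟩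
  show b.mulVec ((fun i => Int.fract (y i)) + fun i => ((⌊y i⌋ : ℤ) : ℝ)) = x
  have h1 : ((fun i => Int.fract (y i)) + fun i => ((⌊y i⌋ : ℤ) : ℝ)) = y := by
    funext i
    show Int.fract (y i) + (⌊y i⌋ : ℝ) = y i
    rw [Int.fract]; ring
  rw [h1, hy, Matrix.mulVec_mulVec, Matrix.mul_nonsing_inv b hd, Matrix.one_mulVec]

lemma tile_dist {d : ℕ} {b : Matrix (Fin d) (Fin d) ℝ} {s : Fin d → ℤ}
    {z w : Fin d → ℝ} (hz : z ∈ tile b s) (hw : w ∈ tile b s) :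
    ‖z - w‖ ≤ ‖LinearMap.toContinuousLinearMap (Matrix.toLin' b)‖ := by
  rw [tile_eq] at hz hw
  obtain ⟨p, hp, rfl⟩ := hz
  obtain ⟨q, hq, rfl⟩ := hw
  set L := LinearMap.toContinuousLinearMap (Matrix.toLin' b)
  have : Matrix.toLin' b p - Matrix.toLin' b q = L (p - q) := by
    simp [L, map_sub]
  rw [this]
  calc ‖L (p - q)‖ ≤ ‖L‖ * ‖p - q‖ := L.le_opNorm _
    _ ≤ ‖L‖ * 1 := by
        refine mul_le_mul_of_nonneg_left ((pi_norm_le_iff_of_nonneg zero_le_one).2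
          fun i => ?_) (norm_nonneg _)
        have hp1 : (s i : ℝ) ≤ p i ∧ p i ≤ (s i : ℝ) + 1 := ⟨hp.1 i, by simpa using hp.2 i⟩
        have hq1 : (s i : ℝ) ≤ q i ∧ q i ≤ (s i : ℝ) + 1 := ⟨hq.1 i, by simpa using hq.2 i⟩
        rw [Pi.sub_apply, Real.norm_eq_abs, abs_le]
        constructor <;> linarith [hp1.1, hp1.2, hq1.1, hq1.2]
    _ = ‖L‖ := mul_one _

lemma tile_measurable {d : ℕ} (b : Matrix (Fin d) (Fin d) ℝ) (s : Fin d → ℤ) :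
    MeasurableSet (tile b s) := by
  rw [tile_eq]
  have hc : Continuous (Matrix.toLin' b) :=
    (LinearMap.toContinuousLinearMap (Matrix.toLin' b)).continuous
  exact (isCompact_Icc.image hc).measurableSet

lemma volume_tiles_union {d : ℕ} {I : Set (Fin d → ℝ)} {b : Matrix (Fin d) (Fin d) ℝ}
    (hb : IsUnit b) (hfin : (Ni I b).Finite) :
    volume (⋃ s ∈ Ni I b, tile b s) = (Ni I b).ncard * ENNReal.ofReal |b.det| := by
  have h1 : (⋃ s ∈ Ni I b, tile b s) = ⋃ s ∈ hfin.toFinset, tile b s := by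
    simp [Set.Finite.mem_toFinset]
  rw [h1, measure_biUnion_finset₀ ?_ (fun s _ => (tile_measurable b s).nullMeasurableSet)]
  · rw [Finset.sum_congr rfl (fun s _ => volume_tile b s), Finset.sum_const,
      Set.ncard_eq_toFinset_card _ hfin, nsmul_eq_mul]
  · intro s hs t ht hst
    exact tile_inter_null hb hst

/-- The filter of invertible matrices whose operator norm tends to `0`. -/
def smallGL (d : ℕ) : Filter (Matrix (Fin d) (Fin d) ℝ) :=
  (Filter.comap (fun b : Matrix (Fin d) (Fin d) ℝ =>
      ‖LinearMap.toContinuousLinearMap (Matrix.toLin' b)‖) (nhds 0)) ⊓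
    Filter.principal {b | IsUnit b}

/-- For a bounded nondegenerate `d`-dimensional interval `I`,
`|det b| · #N_i(b) → μ(I)` as the operator norm of the invertible `b` tends to `0`. -/
theorem det_mul_card_Ni_tendsto {d : ℕ} (l u : Fin d → ℝ) (hlu : ∀ i, l i < u i) :
    Tendsto
      (fun b : Matrix (Fin d) (Fin d) ℝ =>
        |b.det| * ((Ni (Set.univ.pi fun i => Set.Ioo (l i) (u i)) b).ncard : ℝ))
      (smallGL d)
      (nhds ((volume (Set.univ.pi fun i => Set.Ioo (l i) (u i))).toReal)) := by
  set I : Set (Fin d → ℝ) := Set.univ.pi fun i => Set.Ioo (l i) (u i) with hI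
  have hIvol : volume I = ∏ i, ENNReal.ofReal (u i - l i) := by
    rw [hI, volume_pi_pi]; simp [Real.volume_Ioo]
  have hIne : volume I ≠ ⊤ := by
    rw [hIvol]
    exact (ENNReal.prod_lt_top (fun i _ => ENNReal.ofReal_lt_top)).ne
  have hVtoReal : (volume I).toReal = ∏ i, (u i - l i) := by
    rw [hIvol, ENNReal.toReal_prod]
    exact Finset.prod_congr rfl fun i _ => ENNReal.toReal_ofReal (sub_nonneg.2 (hlu i).le)
  have hIbdd : Bornology.IsBounded I := by
    apply (isCompact_Icc (a := l) (b := u)).isBounded.subset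
    intro x hx
    exact ⟨fun i => ((hx i (Set.mem_univ i)).1).le, fun i => ((hx i (Set.mem_univ i)).2).le⟩
  -- upper bound
  have hub : ∀ b : Matrix (Fin d) (Fin d) ℝ, IsUnit b →
      |b.det| * ((Ni I b).ncard : ℝ) ≤ (volume I).toReal := by
    intro b hb
    have hfin := Ni_finite hIbdd hb
    have hsub : (⋃ s ∈ Ni I b, tile b s) ⊆ I := Set.iUnion₂_subset fun s hs => hs
    have hm := measure_mono (μ := volume) hsub
    rw [volume_tiles_union hb hfin] at hm
    have h2 := ENNReal.toReal_mono hIne hm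
    rwa [ENNReal.toReal_mul, ENNReal.toReal_natCast,
      ENNReal.toReal_ofReal (abs_nonneg _), mul_comm] at h2
  -- lower bound
  have hlb : ∀ ε : ℝ, 0 < ε → (∀ i, 0 < u i - l i - 2*ε) →
      ∀ b : Matrix (Fin d) (Fin d) ℝ, IsUnit b →
      ‖LinearMap.toContinuousLinearMap (Matrix.toLin' b)‖ < ε →
      (∏ i, (u i - l i - 2*ε)) ≤ |b.det| * ((Ni I b).ncard : ℝ) := by
    intro ε hε hpos b hb hnorm
    have hfin := Ni_finite hIbdd hb
    have hsub : Set.univ.pi (fun i => Set.Ioo (l i + ε) (u i - ε)) ⊆ ⋃ s ∈ Ni I b, tile b s := by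
      intro x hx
      have hxs : x ∈ tile b (fun i => ⌊b⁻¹.mulVec x i⌋) := mem_tile_floor hb x
      refine Set.mem_biUnion ?_ hxs
      intro z hz
      have hdz : ‖z - x‖ ≤ ‖LinearMap.toContinuousLinearMap (Matrix.toLin' b)‖ :=
        tile_dist hz hxs
      rw [hI, Set.mem_univ_pi]
      intro i
      have hco : |z i - x i| < ε := by
        have := (norm_le_pi_norm (z - x) i).trans hdz
        rw [Pi.sub_apply, Real.norm_eq_abs] at this
        exact this.trans_lt hnorm
      have hx1 := (Set.mem_univ_pi.1 hx) i
      rw [abs_lt] at hco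
      obtain ⟨hx2, hx3⟩ := hx1
      exact ⟨by linarith, by linarith⟩
    have hUI : (⋃ s ∈ Ni I b, tile b s) ⊆ I := Set.iUnion₂_subset fun s hs => hs
    have hUne : volume (⋃ s ∈ Ni I b, tile b s) ≠ ⊤ :=
      (lt_of_le_of_lt (measure_mono hUI) hIne.lt_top).ne
    have h1 := measure_mono (μ := volume) hsub
    have h2 := ENNReal.toReal_mono hUne h1
    rw [volume_tiles_union hb hfin, ENNReal.toReal_mul, ENNReal.toReal_natCast,
      ENNReal.toReal_ofReal (abs_nonneg _), volume_pi_pi, ENNReal.toReal_prod] at h2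
    calc ∏ i, (u i - l i - 2*ε)
        = ∏ i, (volume (Set.Ioo (l i + ε) (u i - ε))).toReal := by
          refine Finset.prod_congr rfl fun i _ => ?_
          rw [Real.volume_Ioo, ENNReal.toReal_ofReal (by linarith [hpos i])]
          ring
      _ ≤ |b.det| * ((Ni I b).ncard : ℝ) := by rw [mul_comm]; exact h2
  -- eventually facts
  have hunit : ∀ᶠ b in smallGL d, IsUnit b :=
    Filter.mem_inf_of_right (Filter.mem_principal_self _)
  have hsmall : ∀ ε : ℝ, 0 < ε → ∀ᶠ b in smallGL d,
      ‖LinearMap.toContinuousLinearMap (Matrix.toLin' b)‖ < ε := by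
    intro ε hε
    have ht : Tendsto (fun b : Matrix (Fin d) (Fin d) ℝ =>
        ‖LinearMap.toContinuousLinearMap (Matrix.toLin' b)‖)
        (Filter.comap (fun b : Matrix (Fin d) (Fin d) ℝ =>
          ‖LinearMap.toContinuousLinearMap (Matrix.toLin' b)‖) (nhds 0)) (nhds 0) :=
      tendsto_comap
    exact (ht.eventually (gt_mem_nhds hε)).filter_mono inf_le_left
  rw [tendsto_order]
  constructor
  · intro a ha
    have hg : Continuous (fun ε : ℝ => ∏ i, (u i - l i - 2*ε)) :=
      continuous_finset_prod _ fun i _ =>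
        continuous_const.sub (continuous_const.mul continuous_id)
    have ha0 : a < (fun ε : ℝ => ∏ i, (u i - l i - 2*ε)) 0 := by
      simpa [hVtoReal] using ha
    have hev1 : ∀ᶠ ε in nhds (0:ℝ), a < ∏ i, (u i - l i - 2*ε) :=
      hg.continuousAt.eventually (lt_mem_nhds ha0)
    have hev2 : ∀ᶠ ε in nhds (0:ℝ), ∀ i, 0 < u i - l i - 2*ε := by
      rw [eventually_all]
      intro i
      have hc : Continuous (fun ε : ℝ => u i - l i - 2*ε) :=
        continuous_const.sub (continuous_const.mul continuous_id)
      have : (0:ℝ) < u i - l i - 2*0 := by simpa using sub_pos.2 (hlu i)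
      exact hc.continuousAt.eventually (lt_mem_nhds (by simpa using this))
    have hev3 := (((hev1.and hev2).filter_mono nhdsWithin_le_nhds).and
      (self_mem_nhdsWithin (s := Set.Ioi (0:ℝ)) (a := (0:ℝ)))).exists
    obtain ⟨ε, ⟨haε, hpos⟩, hε⟩ := hev3
    filter_upwards [hunit, hsmall ε hε] with b hb hnb
    exact lt_of_lt_of_le haε (hlb ε hε hpos b hb hnb)
  · intro a ha
    exact hunit.mono fun b hb => lt_of_le_of_lt (hub b hb) ha
end
end

section
/- With A_n as in the wavelet-set construction (0 < r < R/3), the sets A_n satisfy: (1) A_i ⊆ B_∞(0, R/2) \ A_0 for all i ≥ 1, and (2) A_i ∩ A_j = ∅ for i ≠ j. -/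
open MeasureTheory Filter
noncomputable section

/-- The piecewise translation `T̃(x) = x + R·ξ_j` for `x` in the `j`-th quadrant. -/
def quadShift {d : ℕ} (R : ℝ) (x : Fin d → ℝ) : Fin d → ℝ :=
  x + fun i => R * (if 0 < x i then 1 else -1)

/-- `A_0 = B_∞(0, r/2)` and `A_{n+1} = (a⁻¹ ∘ T̃)(A_n)` with `a = (R/r)·I`. -/
def Aset (d : ℕ) (r R : ℝ) : ℕ → Set (Fin d → ℝ)
  | 0 => Metric.closedBall 0 (r / 2)
  | n + 1 => (fun x => (r / R) • quadShift R x) '' Aset d r R n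

/-- lower bound sequence -/
def Lb (r q : ℝ) : ℕ → ℝ
  | 0 => 0
  | n + 1 => r + q * Lb r q n

/-- upper bound sequence -/
def Ub (r q : ℝ) : ℕ → ℝ
  | 0 => r / 2
  | n + 1 => r + q * Ub r q n

lemma norm_step {d : ℕ} (hd : 0 < d) {r R : ℝ} (hr : 0 < r) (hR : 0 < R)
    (x : Fin d → ℝ) : ‖(r / R) • quadShift R x‖ = (r / R) * (R + ‖x‖) := by
  have hq : 0 < r / R := div_pos hr hR
  have hcoord : ∀ i, ‖((r / R) • quadShift R x) i‖ = (r / R) * (R + ‖x i‖) := by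
    intro i
    have : ((r / R) • quadShift R x) i = (r / R) * (x i + R * (if 0 < x i then 1 else -1)) := rfl
    rw [this, Real.norm_eq_abs, Real.norm_eq_abs, abs_mul, abs_of_pos hq]
    congr 1
    by_cases h : 0 < x i
    · rw [if_pos h, mul_one, abs_of_pos (by linarith), abs_of_pos h]; ring
    · rw [if_neg h, mul_neg_one]
      push_neg at h
      rw [abs_of_nonpos (by linarith), abs_of_nonpos h]; ring
  have : Nonempty (Fin d) := ⟨⟨0, hd⟩⟩
  obtain ⟨i, hi⟩ := Finite.exists_max fun i => ‖x i‖
  have hxn : ‖x‖ = ‖x i‖ := le_antisymm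
    ((pi_norm_le_iff_of_nonneg (norm_nonneg _)).2 hi) (norm_le_pi_norm x i)
  apply le_antisymm
  · apply (pi_norm_le_iff_of_nonneg (by positivity)).2
    intro j
    rw [hcoord j]
    have := norm_le_pi_norm x j
    nlinarith [norm_nonneg (x j)]
  · calc (r / R) * (R + ‖x‖) = ‖((r / R) • quadShift R x) i‖ := by rw [hcoord i, hxn]
      _ ≤ _ := norm_le_pi_norm _ i

lemma Aset_norm_bounds {d : ℕ} (hd : 0 < d) {r R : ℝ} (hr : 0 < r) (hrR : 3 * r < R) :
    ∀ n, ∀ x ∈ Aset d r R n, Lb r (r / R) n ≤ ‖x‖ ∧ ‖x‖ ≤ Ub r (r / R) n := by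
  have hR : 0 < R := by linarith
  intro n
  induction n with
  | zero =>
    intro x hx
    rw [Aset, Metric.mem_closedBall, dist_zero_right] at hx
    exact ⟨norm_nonneg x, hx⟩
  | succ n ih =>
    rintro x ⟨y, hy, rfl⟩
    obtain ⟨h1, h2⟩ := ih y hy
    rw [norm_step hd hr hR]
    have hq : 0 < r / R := div_pos hr hR
    have hrq : (r / R) * R = r := div_mul_cancel₀ r hR.ne'
    constructor
    · show r + (r / R) * Lb r (r / R) n ≤ _
      nlinarith
    · show _ ≤ r + (r / R) * Ub r (r / R) n
      nlinarith

lemma Lb_lt_succ {r q : ℝ} (hr : 0 < r) (hq : 0 < q) : ∀ n, Lb r q n < Lb r q (n + 1) := by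
  intro n
  induction n with
  | zero => show (0:ℝ) < r + q * 0; simpa
  | succ n ih =>
    show r + q * Lb r q n < r + q * Lb r q (n + 1)
    nlinarith

lemma Lb_mono {r q : ℝ} (hr : 0 < r) (hq : 0 < q) : Monotone (Lb r q) :=
  monotone_nat_of_le_succ fun n => (Lb_lt_succ hr hq n).le

lemma Ub_lt_Lb_succ {r q : ℝ} (hr : 0 < r) (hq : 0 < q) : ∀ n, Ub r q n < Lb r q (n + 1) := by
  intro n
  induction n with
  | zero => show r / 2 < r + q * 0; simpa using by linarith
  | succ n ih =>
    show r + q * Ub r q n < r + q * Lb r q (n + 1)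
    nlinarith

lemma Ub_le {r R : ℝ} (hr : 0 < r) (hrR : 3 * r < R) : ∀ n, Ub r (r / R) n ≤ R / 2 := by
  have hR : 0 < R := by linarith
  have hrq : (r / R) * R = r := div_mul_cancel₀ r hR.ne'
  have hq : 0 < r / R := div_pos hr hR
  intro n
  induction n with
  | zero => show r / 2 ≤ R / 2; linarith
  | succ n ih =>
    show r + (r / R) * Ub r (r / R) n ≤ R / 2
    nlinarith

/-- (1) `A_i ⊆ B_∞(0, R/2) \ A_0` for `i ≥ 1`, and (2) the `A_i` are pairwise disjoint.
(Balls are sup-norm balls, since the norm on `Fin d → ℝ` is the sup norm.) -/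
theorem Aset_disjoint {d : ℕ} (hd : 0 < d) (r R : ℝ) (hr : 0 < r) (hrR : 3 * r < R) :
    (∀ i : ℕ, 1 ≤ i →
        Aset d r R i ⊆ Metric.closedBall 0 (R / 2) \ Aset d r R 0) ∧
      ∀ i j : ℕ, i ≠ j → Aset d r R i ∩ Aset d r R j = ∅ := by
  have hR : 0 < R := by linarith
  have hq : 0 < r / R := div_pos hr hR
  have key : ∀ i j : ℕ, i < j → Aset d r R i ∩ Aset d r R j = ∅ := by
    intro i j hij
    rw [Set.eq_empty_iff_forall_notMem]
    rintro x ⟨hxi, hxj⟩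
    obtain ⟨-, h2⟩ := Aset_norm_bounds hd hr hrR i x hxi
    obtain ⟨h3, -⟩ := Aset_norm_bounds hd hr hrR j x hxj
    have := Ub_lt_Lb_succ hr hq i
    have := Lb_mono hr hq hij
    linarith
  refine ⟨?_, ?_⟩
  · intro i hi x hx
    obtain ⟨h1, h2⟩ := Aset_norm_bounds hd hr hrR i x hx
    constructor
    · rw [Metric.mem_closedBall, dist_zero_right]
      exact h2.trans (Ub_le hr hrR i)
    · intro hx0
      have : Lb r (r / R) 1 ≤ Lb r (r / R) i := Lb_mono hr hq hi
      have h1' : Lb r (r / R) 1 = r := by show r + (r / R) * 0 = r; ring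
      rw [Aset, Metric.mem_closedBall, dist_zero_right] at hx0
      linarith
  · intro i j hij
    rcases hij.lt_or_gt with h | h
    · exact key i j h
    · rw [Set.inter_comm]; exact key j i h
end
end
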